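/- Let N ≥ 2 and let M_1,…,M_N be projective measurements on ℂ^d given by orthonormal bases {|u^m_i⟩}, and let |ψ⟩ be a unit vector in ℂ^d with outcome probabilities p^m_i = |⟨u^m_i|ψ⟩|². Then ∑_{m=1}^N H_∞(M_m) ≥ −log₂(h), where h = max_{i_1,…,i_N} ∏_{m=1}^N (1 + √(c(u^m_{i_m}, u^{m+1}_{i_{m+1}})))/2, with the convention u^{N+1} := u^1. -/

import Mathlib

/-! For unit vectors `a`, `b`, `ψ` one has `|⟨a|ψ⟩|² + |⟨b|ψ⟩|² ≤ 1 + |⟨a|b⟩|`. If `i_m` maximises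
the outcome probability of `M_m` and `p_m` is that maximum, AM–GM then gives
`p_m p_{m+1} ≤ ((1 + √c(u^m_{i_m}, u^{m+1}_{i_{m+1}}))/2)²`. Multiplying around the cycle, every
`p_m` occurs twice, so `(∏ p_m)² ≤ h²`, and `-log₂` turns `∏ p_m ≤ h` into the bound. -/

open scoped BigOperators ComplexOrder

noncomputable section

/-- Standard inner product `⟨a|b⟩` on `ℂ^d` (conjugate-linear in the first argument). -/
def inn {d : ℕ} (a b : Fin d → ℂ) : ℂ := ∑ k, (starRingEnd ℂ) (a k) * b k

/-- The overlap `c(a,b) = |⟨a|b⟩|²`. -/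
def ov {d : ℕ} (a b : Fin d → ℂ) : ℝ := ‖inn a b‖ ^ 2

/-- `u` lists the vectors of an orthonormal basis of `ℂ^d`. -/
def IsONB {d : ℕ} (u : Fin d → Fin d → ℂ) : Prop :=
  ∀ i j, inn (u i) (u j) = if i = j then 1 else 0

/-- Shannon entropy (base 2) of a probability vector; note `Real.logb 2 0 = 0`. -/
def shannon {d : ℕ} (p : Fin d → ℝ) : ℝ := -∑ i, p i * Real.logb 2 (p i)

/-- Outcome probabilities `p_i = ⟨u_i|ρ|u_i⟩` of a projective measurement on the state `ρ`. -/
def probM {d : ℕ} (ρ : Matrix (Fin d) (Fin d) ℂ) (v : Fin d → Fin d → ℂ) (i : Fin d) : ℝ :=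
  (dotProduct (star (v i)) (ρ.mulVec (v i))).re

open Classical in
/-- Von Neumann entropy (base 2): `S(ρ) = -∑ λ_k log₂ λ_k` over the eigenvalues of `ρ`. -/
def vNEnt {ι : Type} [Fintype ι] [DecidableEq ι] (A : Matrix ι ι ℂ) : ℝ :=
  if h : A.IsHermitian then -∑ k, h.eigenvalues k * Real.logb 2 (h.eigenvalues k) else 0

open Classical in
/-- Matrix base-2 logarithm on the support, via the spectral decomposition
(eigenvalue `0` is sent to `0` since `Real.logb 2 0 = 0`). -/
def mlog2 {ι : Type} [Fintype ι] [DecidableEq ι] (A : Matrix ι ι ℂ) : Matrix ι ι ℂ :=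
  if h : A.IsHermitian then
    (h.eigenvectorUnitary : Matrix ι ι ℂ) *
      Matrix.diagonal (fun k => (Real.logb 2 (h.eigenvalues k) : ℂ)) *
      star (h.eigenvectorUnitary : Matrix ι ι ℂ)
  else 0

/-- Quantum relative entropy `S(ρ‖σ) = Tr(ρ log₂ ρ) - Tr(ρ log₂ σ)`. -/
def relEnt {ι : Type} [Fintype ι] [DecidableEq ι] (ρ σ : Matrix ι ι ℂ) : ℝ :=
  ((ρ * mlog2 ρ).trace - (ρ * mlog2 σ).trace).re

/-- The bound `b` of Theorem 2 of the paper, for `N = n + 2` measurements (indexed `0,…,n+1`):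
`b = max_{i_N} { ∑_{i_2,…,i_{N-1}} max_{i_1}[c(u^1_{i_1},u^2_{i_2})]
  ∏_{m=2}^{N-1} c(u^m_{i_m},u^{m+1}_{i_{m+1}}) }`.
Here `g : Fin n → Fin d` lists the middle indices `(i_2,…,i_{N-1})`, `jN = i_N`, and
`Fin.snoc g jN : Fin (n+1) → Fin d` is the chain `(i_2,…,i_N)`. -/
def bBound {d n : ℕ} (u : Fin (n + 2) → Fin d → Fin d → ℂ) : ℝ :=
  ⨆ jN : Fin d, ∑ g : Fin n → Fin d,
    (⨆ i1 : Fin d, ov (u 0 i1) (u 1 ((Fin.snoc g jN : Fin (n + 1) → Fin d) 0))) *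
      ∏ k : Fin n, ov (u k.succ.castSucc ((Fin.snoc g jN : Fin (n + 1) → Fin d) k.castSucc))
        (u k.succ.succ ((Fin.snoc g jN : Fin (n + 1) → Fin d) k.succ))

/-- Partial trace over system `A`: `(Tr_A X)_{j j'} = ∑_i X_{(i,j),(i,j')}`. -/
def trA {d dB : ℕ} (X : Matrix (Fin d × Fin dB) (Fin d × Fin dB) ℂ) :
    Matrix (Fin dB) (Fin dB) ℂ :=
  Matrix.of fun j j' => ∑ i, X (i, j) (i, j')

/-- The operator `|a⟩⟨a| ⊗ I` acting on `ℂ^d ⊗ ℂ^{dB}`. -/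
def projA {d : ℕ} (dB : ℕ) (a : Fin d → ℂ) : Matrix (Fin d × Fin dB) (Fin d × Fin dB) ℂ :=
  Matrix.kroneckerMap (· * ·) (Matrix.vecMulVec a (star a)) (1 : Matrix (Fin dB) (Fin dB) ℂ)

end
open scoped InnerProductSpace

section TwoProjections

variable {𝕜 E : Type*} [RCLike 𝕜] [SeminormedAddCommGroup E] [InnerProductSpace 𝕜 E]

theorem sq_norm_inner_add_sq_norm_inner_le {a b : E} (ha : ‖a‖ = 1) (hb : ‖b‖ = 1) (ψ : E) :
    ‖⟪a, ψ⟫_𝕜‖ ^ 2 + ‖⟪b, ψ⟫_𝕜‖ ^ 2 ≤ (1 + ‖⟪a, b⟫_𝕜‖) * ‖ψ‖ ^ 2 := by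
  set x := ⟪a, ψ⟫_𝕜
  set y := ⟪b, ψ⟫_𝕜
  set t := ⟪a, b⟫_𝕜
  set s := ‖x‖ ^ 2 + ‖y‖ ^ 2
  -- Cauchy–Schwarz against `v`, whose pairing with `ψ` is the left-hand side.
  set v := x • a + y • b
  have hvψ : ⟪v, ψ⟫_𝕜 = (s : 𝕜) := by
    rw [inner_add_left, inner_smul_left, inner_smul_left, RCLike.conj_mul, RCLike.conj_mul]
    simp only [s, RCLike.ofReal_add, RCLike.ofReal_pow]
  have hcross : RCLike.re ⟪x • a, y • b⟫_𝕜 ≤ ‖x‖ * ‖y‖ * ‖t‖ := by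
    rw [inner_smul_left, inner_smul_right (𝕜 := 𝕜)]
    refine (RCLike.re_le_norm _).trans_eq ?_
    simp only [norm_mul, RCLike.norm_conj, t, mul_assoc]
  have hv : ‖v‖ ^ 2 ≤ s * (1 + ‖t‖) := by
    have hxy : 2 * (‖x‖ * ‖y‖) ≤ s := by nlinarith [sq_nonneg (‖x‖ - ‖y‖)]
    rw [norm_add_sq (𝕜 := 𝕜), norm_smul, norm_smul, ha, hb]
    nlinarith [norm_nonneg t]
  have hcs : s ≤ ‖v‖ * ‖ψ‖ := by
    have := norm_inner_le_norm (𝕜 := 𝕜) v ψ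
    rwa [hvψ, RCLike.norm_ofReal, abs_of_nonneg (by positivity)] at this
  rcases (show 0 ≤ s by positivity).eq_or_lt with hs0 | hs0
  · rw [← hs0]; positivity
  · refine le_of_mul_le_mul_left ?_ hs0
    calc s * s ≤ (‖v‖ * ‖ψ‖) ^ 2 := by nlinarith
      _ = ‖v‖ ^ 2 * ‖ψ‖ ^ 2 := mul_pow _ _ _
      _ ≤ s * (1 + ‖t‖) * ‖ψ‖ ^ 2 := by gcongr
      _ = s * ((1 + ‖t‖) * ‖ψ‖ ^ 2) := mul_assoc _ _ _

end TwoProjections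

theorem Fintype.prod_le_prod_of_mul_perm_le_sq {ι : Type*} [Fintype ι] (σ : Equiv.Perm ι)
    {s c : ι → ℝ} (hs : ∀ i, 0 ≤ s i) (hc : ∀ i, 0 ≤ c i) (h : ∀ i, s i * s (σ i) ≤ c i ^ 2) :
    ∏ i, s i ≤ ∏ i, c i := by
  refine (pow_le_pow_iff_left₀ (Finset.prod_nonneg fun i _ => hs i)
    (Finset.prod_nonneg fun i _ => hc i) two_ne_zero).mp ?_
  calc (∏ i, s i) ^ 2 = ∏ i, s i * s (σ i) := by
        rw [Finset.prod_mul_distrib, Equiv.prod_comp σ s, sq]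
    _ ≤ ∏ i, c i ^ 2 := Finset.prod_le_prod (fun i _ => mul_nonneg (hs i) (hs _)) fun i _ => h i
    _ = (∏ i, c i) ^ 2 := Finset.prod_pow _ _ _

section InnerOnFin

variable {d : ℕ}

theorem inn_eq_inner (a b : Fin d → ℂ) : inn a b = ⟪WithLp.toLp 2 a, WithLp.toLp 2 b⟫_ℂ := by
  simp [inn, PiLp.inner_apply, mul_comm]

theorem ov_eq_sq_norm_inner (a b : Fin d → ℂ) :
    ov a b = ‖⟪WithLp.toLp 2 a, WithLp.toLp 2 b⟫_ℂ‖ ^ 2 := by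
  rw [ov, inn_eq_inner]

theorem norm_toLp_eq_one {a : Fin d → ℂ} (ha : inn a a = 1) : ‖WithLp.toLp 2 a‖ = 1 := by
  have : ‖WithLp.toLp 2 a‖ ^ 2 = 1 := by
    rw [← inner_self_eq_norm_sq (𝕜 := ℂ), ← inn_eq_inner, ha, RCLike.one_re]
  exact (pow_eq_one_iff_of_nonneg (norm_nonneg _) two_ne_zero).mp this

theorem ov_add_ov_le {a b ψ : Fin d → ℂ} (ha : inn a a = 1) (hb : inn b b = 1) (hψ : inn ψ ψ = 1) :
    ov a ψ + ov b ψ ≤ 1 + √(ov a b) := by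
  rw [ov_eq_sq_norm_inner a b, Real.sqrt_sq (norm_nonneg _), ov_eq_sq_norm_inner,
    ov_eq_sq_norm_inner]
  simpa [norm_toLp_eq_one hψ] using
    sq_norm_inner_add_sq_norm_inner_le (norm_toLp_eq_one ha) (norm_toLp_eq_one hb) (WithLp.toLp 2 ψ)

theorem IsONB.orthonormal {u : Fin d → Fin d → ℂ} (hu : IsONB u) :
    Orthonormal ℂ fun i => WithLp.toLp 2 (u i) :=
  orthonormal_iff_ite.mpr fun i j => by rw [← inn_eq_inner, hu]

theorem IsONB.sum_ov {u : Fin d → Fin d → ℂ} (hu : IsONB u) (ψ : Fin d → ℂ) :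
    ∑ i, ov (u i) ψ = (inn ψ ψ).re := by
  let b := OrthonormalBasis.mk hu.orthonormal
    (hu.orthonormal.linearIndependent.span_eq_top_of_card_eq_finrank' (by simp)).ge
  have := b.sum_sq_norm_inner_right (WithLp.toLp 2 ψ)
  simp only [b, OrthonormalBasis.coe_mk, ← ov_eq_sq_norm_inner] at this
  rw [this, inn_eq_inner, inner_self_eq_norm_sq_to_K]
  norm_cast

theorem IsONB.exists_ov_pos {u : Fin d → Fin d → ℂ} (hu : IsONB u) {ψ : Fin d → ℂ}
    (hψ : inn ψ ψ = 1) : ∃ i, 0 < ov (u i) ψ := by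
  by_contra! h
  have := hu.sum_ov ψ
  rw [hψ, Complex.one_re] at this
  linarith [Finset.sum_nonpos fun i (_ : i ∈ Finset.univ) => h i]

theorem IsONB.inn_self {u : Fin d → Fin d → ℂ} (hu : IsONB u) (i : Fin d) :
    inn (u i) (u i) = 1 := by
  simpa using hu i i

theorem IsONB.ciSup_ov_pos {u : Fin d → Fin d → ℂ} (hu : IsONB u) {ψ : Fin d → ℂ}
    (hψ : inn ψ ψ = 1) : 0 < ⨆ i, ov (u i) ψ :=
  let ⟨i, hi⟩ := hu.exists_ov_pos hψ
  hi.trans_le (le_ciSup (f := fun j => ov (u j) ψ) (Finite.bddAbove_range _) i)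

theorem mul_le_div_two_sq_of_add_le {a b c : ℝ} (ha : 0 ≤ a) (hb : 0 ≤ b) (h : a + b ≤ c) :
    a * b ≤ (c / 2) ^ 2 := by
  nlinarith [sq_nonneg (a - b)]

end InnerOnFin

theorem min_entropy_uncertainty_general {d n : ℕ} (u : Fin (n + 2) → Fin d → Fin d → ℂ)
    (hu : ∀ m, IsONB (u m)) (ψ : Fin d → ℂ) (hψ : inn ψ ψ = 1) :
    ∑ m : Fin (n + 2), -Real.logb 2 (⨆ i : Fin d, ov (u m i) ψ) ≥
      -Real.logb 2 (⨆ i : Fin (n + 2) → Fin d,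
        ∏ m : Fin (n + 2), (1 + Real.sqrt (ov (u m (i m)) (u (m + 1) (i (m + 1))))) / 2) := by
  have : Nonempty (Fin d) := let ⟨i, _⟩ := (hu 0).exists_ov_pos hψ; ⟨i⟩
  set s : Fin (n + 2) → ℝ := fun m => ⨆ i : Fin d, ov (u m i) ψ
  have hs : ∀ m, 0 < s m := fun m => (hu m).ciSup_ov_pos hψ
  choose i hi using fun m => exists_eq_ciSup_of_finite (f := fun j => ov (u m j) ψ)
  have hstep : ∀ m, s m * s (m + 1) ≤
      ((1 + √(ov (u m (i m)) (u (m + 1) (i (m + 1))))) / 2) ^ 2 := fun m => by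
    simp only [s, ← hi]
    exact mul_le_div_two_sq_of_add_le (sq_nonneg _) (sq_nonneg _)
      (ov_add_ov_le ((hu m).inn_self _) ((hu (m + 1)).inn_self _) hψ)
  have hprod := Fintype.prod_le_prod_of_mul_perm_le_sq (Equiv.addRight 1) (fun m => (hs m).le)
    (fun m => by positivity) hstep
  rw [Finset.sum_neg_distrib, ← Real.logb_prod _ _ fun m _ => (hs m).ne', ge_iff_le,
    neg_le_neg_iff]
  exact Real.logb_le_logb_of_le one_lt_two (Finset.prod_pos fun m _ => hs m)
    (hprod.trans (by apply le_ciSup (Finite.bddAbove_range _) i))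

/-- Theorem 1 of the paper: for `N = n + 2 ≥ 2` projective measurements on a
pure state `ψ`, `∑_m H_∞(M_m) ≥ -log₂ h` with
`h = max_{i_1,…,i_N} ∏_m (1 + √(c(u^m_{i_m},u^{m+1}_{i_{m+1}})))/2`, superscripts mod `N`. -/
theorem min_entropy_uncertainty {d n : ℕ} (hd : 0 < d) (u : Fin (n + 2) → Fin d → Fin d → ℂ)
    (hu : ∀ m, IsONB (u m)) (ψ : Fin d → ℂ) (hψ : inn ψ ψ = 1) :
    ∑ m : Fin (n + 2), -Real.logb 2 (⨆ i : Fin d, ov (u m i) ψ) ≥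
      -Real.logb 2 (⨆ i : Fin (n + 2) → Fin d,
        ∏ m : Fin (n + 2), (1 + Real.sqrt (ov (u m (i m)) (u (m + 1) (i (m + 1))))) / 2) :=
  min_entropy_uncertainty_general u hu ψ hψ
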